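/- Fix an integer n > 0 and a continuous path α : [0,1] → [0,1]ⁿ each of whose coordinate functions t ↦ (α t) i is nondecreasing. For x ∈ [0,1]ⁿ define the vertex v(x) ∈ [0,1]ⁿ by v(x) i = 1 if x i = 1 and v(x) i = 0 otherwise. Suppose that α 0 has at least one coordinate equal to 0 or 1, that α 1 has at least one coordinate equal to 0 or 1, and that every coordinate of α(1/2) lies in the open interval (0,1). Then v(α 0) is the vertex (0,…,0) and v(α 1) ≠ (0,…,0); in particular v(α 0) ≠ v(α 1), so every path from v(α 0) to v(α 1) is non-constant. -/

import Mathlib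

/-!
A directed path has nondecreasing coordinates, so every coordinate of `α 0` is at most the
corresponding coordinate of `α (1/2)`, hence `< 1`, and every coordinate of `α 1` is at least
it, hence `> 0`. Thus the start has no coordinate equal to `1` (its vertex is the origin), while
the boundary coordinate of the end point must equal `1` (its vertex is not the origin).
-/

noncomputable def cubeVertex {ι : Type*} (x : ι → ℝ) : ι → ℝ := fun i => if x i = 1 then 1 else 0

theorem cubeVertex_eq_zero_iff {ι : Type*} {x : ι → ℝ} :
    cubeVertex x = 0 ↔ ∀ i, x i ≠ 1 := by
  simp [funext_iff, cubeVertex]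

/-- If a directed path on the directed unit `n`-cube starts and ends on the
boundary but passes through the interior at time `1/2`, then its initial
vertex is `(0,…,0)`, its final vertex is not, and so they differ. -/
theorem cube_dipath_boundary_interior (n : ℕ)
    (α : Set.Icc (0:ℝ) 1 → (Fin n → ℝ))
    (hmono : ∀ i, Monotone fun t => α t i)
    (h1 : ∃ i : Fin n, α 1 i = 0 ∨ α 1 i = 1)
    (hmid : ∀ i : Fin n,
      α ⟨1/2, by norm_num⟩ i ∈ Set.Ioo (0:ℝ) 1) :
    (fun i : Fin n => if α 0 i = 1 then (1:ℝ) else 0) = (fun _ => (0:ℝ)) ∧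
    (fun i : Fin n => if α 1 i = 1 then (1:ℝ) else 0) ≠ (fun _ => (0:ℝ)) ∧
    (fun i : Fin n => if α 0 i = 1 then (1:ℝ) else 0) ≠
      (fun i : Fin n => if α 1 i = 1 then (1:ℝ) else 0) := by
  have hstart (i : Fin n) : α 0 i ≠ 1 :=
    ((hmono i unitInterval.nonneg').trans_lt (hmid i).2).ne
  have hend : ∃ i, α 1 i = 1 := by
    obtain ⟨i, hi | hi⟩ := h1
    · exact absurd hi ((hmid i).1.trans_le (hmono i unitInterval.le_one')).ne'
    · exact ⟨i, hi⟩
  have hv0 : cubeVertex (α 0) = 0 := cubeVertex_eq_zero_iff.2 hstart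
  have hv1 : cubeVertex (α 1) ≠ 0 := by simpa [cubeVertex_eq_zero_iff] using hend
  show cubeVertex (α 0) = 0 ∧ cubeVertex (α 1) ≠ 0 ∧ cubeVertex (α 0) ≠ cubeVertex (α 1)
  exact ⟨hv0, hv1, hv0 ▸ hv1.symm⟩
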